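/- Let C be a nonempty compact convex subset of a real uniformly convex Banach space X, let T : C → C be a uniformly L-Lipschitzian, nearly nonexpansive mapping with respect to {a_n} with Σ_{n=0}^∞ a_n < ∞, let {α_n} satisfy 0 < a ≤ α_n ≤ b < 1 for all n, and let {x_n} be the modified Picard–Mann hybrid iteration y_n = (1 − α_n)x_n + α_n T^n x_n, x_{n+1} = T^n y_n. Then {x_n} converges strongly to a fixed point of T if and only if liminf_{n→∞} d(x_n, F(T)) = 0, where d(x, F(T)) = inf{‖x − p‖ : p ∈ F(T)}. -/

import Mathlib

/-!
Since `infDist x ∅ = 0`, the converse direction first needs a fixed point. It comes from the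
asymptotic centre of an orbit `uₙ = Tⁿ c`: the radius `r z = limsup ‖uₙ - z‖` attains its minimum
on `C` at some `z`, and `r (Tᵐ z) ≤ r z + aₘ`. By uniform convexity, a point of `C` far from `z`
has a midpoint with `z` of radius smaller than `r z`, so minimising sequences of `r` converge to
`z`; hence `Tᵐ z → z` and `T z = z` by continuity.

For a fixed point `q` each step of the iteration gives `‖xₙ₊₁ - q‖ ≤ ‖xₙ - q‖ + 2 aₙ`. When
`liminf d(xₙ, F) = 0`, compactness yields a cluster point `p` of `(xₙ)` in the closed set `F`,
and summability of `(aₙ)` upgrades "`‖xₙ - p‖` is frequently small" to `‖xₙ - p‖ → 0`.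
-/

open Filter Metric Topology

section UniformConvexity

variable {E : Type*} [SeminormedAddCommGroup E] [NormedSpace ℝ E] [UniformConvexSpace E]

theorem exists_forall_norm_add_le_two_sub_mul {ε : ℝ} (hε : 0 < ε) :
    ∃ δ, 0 < δ ∧ ∀ R, 0 < R → ∀ ⦃x y : E⦄, ‖x‖ ≤ R → ‖y‖ ≤ R → ε * R ≤ ‖x - y‖ →
      ‖x + y‖ ≤ (2 - δ) * R := by
  obtain ⟨δ, hδ, h⟩ := exists_forall_closed_ball_dist_add_le_two_sub E hε
  refine ⟨δ, hδ, fun R hR x y hx hy hxy => ?_⟩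
  have hscale : ∀ z : E, ‖R⁻¹ • z‖ = ‖z‖ / R := fun z => by
    rw [norm_smul_of_nonneg (inv_nonneg.2 hR.le), inv_mul_eq_div]
  have key := h (x := R⁻¹ • x) (by rw [hscale]; exact (div_le_one hR).2 hx) (y := R⁻¹ • y)
    (by rw [hscale]; exact (div_le_one hR).2 hy)
    (by rw [← smul_sub, hscale, le_div_iff₀ hR]; exact hxy)
  rwa [← smul_add, hscale, div_le_iff₀ hR] at key

end UniformConvexity

section AsymptoticRadius

variable {X : Type*} [SeminormedAddCommGroup X] {u v : ℕ → X}

noncomputable def asympRadius (u : ℕ → X) (z : X) : ℝ :=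
  limsup (fun n => ‖u n - z‖) atTop

theorem isBoundedUnder_norm_sub (hu : Bornology.IsBounded (Set.range u)) (z : X) :
    IsBoundedUnder (· ≤ ·) atTop fun n => ‖u n - z‖ := by
  obtain ⟨M, hM⟩ := isBounded_iff_forall_norm_le.1 hu
  exact isBoundedUnder_of ⟨M + ‖z‖, fun n =>
    (norm_sub_le _ _).trans (add_le_add_left (hM _ ⟨n, rfl⟩) _)⟩

theorem isCoboundedUnder_norm_sub (z : X) :
    IsCoboundedUnder (· ≤ ·) atTop fun n => ‖u n - z‖ :=
  isCoboundedUnder_le_of_le atTop fun _ => norm_nonneg _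

theorem asympRadius_nonneg (hu : Bornology.IsBounded (Set.range u)) (z : X) :
    0 ≤ asympRadius u z :=
  le_limsup_of_frequently_le (Frequently.of_forall fun _ => norm_nonneg _)
    (isBoundedUnder_norm_sub hu z)

theorem eventually_norm_sub_lt_of_asympRadius_lt (hu : Bornology.IsBounded (Set.range u))
    {z : X} {R : ℝ} (h : asympRadius u z < R) : ∀ᶠ n in atTop, ‖u n - z‖ < R :=
  eventually_lt_of_limsup_lt h (isBoundedUnder_norm_sub hu z)

theorem asympRadius_le_add_of_eventually_le (hu : Bornology.IsBounded (Set.range u))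
    {w z : X} {c : ℝ} (h : ∀ᶠ n in atTop, ‖v n - w‖ ≤ ‖u n - z‖ + c) :
    asympRadius v w ≤ asympRadius u z + c := by
  rw [asympRadius, asympRadius, ← limsup_add_const atTop _ c (isBoundedUnder_norm_sub hu z)
    (isCoboundedUnder_norm_sub z)]
  exact limsup_le_limsup h (isCoboundedUnder_norm_sub w)
    ((monotone_id.add_const c).isBoundedUnder_le_comp (isBoundedUnder_norm_sub hu z))

theorem lipschitzWith_asympRadius (hu : Bornology.IsBounded (Set.range u)) :
    LipschitzWith 1 (asympRadius u) :=
  LipschitzWith.of_le_add fun z w => by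
    rw [dist_eq_norm]
    exact asympRadius_le_add_of_eventually_le hu (Eventually.of_forall fun n => by
      simpa [norm_sub_rev z w] using norm_sub_le_norm_sub_add_norm_sub (u n) w z)

theorem norm_sub_le_asympRadius_add (hu : Bornology.IsBounded (Set.range u)) (z w : X) :
    ‖z - w‖ ≤ asympRadius u z + asympRadius u w := by
  refine le_of_forall_pos_lt_add fun η hη => ?_
  obtain ⟨n, hz, hw⟩ := ((eventually_norm_sub_lt_of_asympRadius_lt hu
    (lt_add_of_pos_right (asympRadius u z) (half_pos hη))).and
    (eventually_norm_sub_lt_of_asympRadius_lt hu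
      (lt_add_of_pos_right (asympRadius u w) (half_pos hη)))).exists
  calc ‖z - w‖ ≤ ‖u n - z‖ + ‖u n - w‖ := by
        simpa [norm_sub_rev (u n) z] using norm_sub_le_norm_sub_add_norm_sub z (u n) w
    _ < _ := by linarith

variable [NormedSpace ℝ X] [UniformConvexSpace X]

theorem exists_asympRadius_midpoint_le (hu : Bornology.IsBounded (Set.range u))
    {ε : ℝ} (hε : 0 < ε) :
    ∃ δ, 0 < δ ∧ ∀ z w R, asympRadius u z < R → asympRadius u w < R → ε * R ≤ ‖z - w‖ →
      asympRadius u (midpoint ℝ z w) ≤ (1 - δ / 2) * R := by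
  obtain ⟨δ, hδ, h⟩ := exists_forall_norm_add_le_two_sub_mul (E := X) hε
  refine ⟨δ, hδ, fun z w R hz hw hzw => ?_⟩
  have hR : 0 < R := (asympRadius_nonneg hu z).trans_lt hz
  refine limsup_le_of_le (isCoboundedUnder_norm_sub _) ?_
  filter_upwards [eventually_norm_sub_lt_of_asympRadius_lt hu hz,
    eventually_norm_sub_lt_of_asympRadius_lt hu hw] with n hnz hnw
  have hsum := h R hR hnz.le hnw.le (by rwa [sub_sub_sub_cancel_left, norm_sub_rev])
  have hmid : u n - midpoint ℝ z w = (2⁻¹ : ℝ) • ((u n - z) + (u n - w)) := by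
    rw [midpoint_eq_smul_add]; simp only [invOf_eq_inv]; module
  rw [hmid, norm_smul_of_nonneg (by norm_num)]
  linarith

theorem exists_forall_norm_sub_lt_of_isMinOn (hu : Bornology.IsBounded (Set.range u))
    {C : Set X} (hC : Convex ℝ C) {z₀ : X} (hz₀ : z₀ ∈ C) (hmin : IsMinOn (asympRadius u) C z₀)
    {ε : ℝ} (hε : 0 < ε) :
    ∃ ν, 0 < ν ∧ ∀ w ∈ C, asympRadius u w < asympRadius u z₀ + ν → ‖w - z₀‖ < ε := by
  have hr := asympRadius_nonneg hu z₀
  have hdist := norm_sub_le_asympRadius_add hu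
  set r := asympRadius u
  rcases hr.eq_or_lt with hr₀ | hr₀
  · exact ⟨ε, hε, fun w _ hw => by linarith [hdist w z₀]⟩
  -- `ν ≤ δ r(z₀)/4` makes `(1 - δ/2)(r z₀ + ν) < r z₀`: the midpoint of a far `w` and `z₀` wins
  obtain ⟨δ, hδ, hmid⟩ :=
    exists_asympRadius_midpoint_le hu (div_pos hε (by linarith : 0 < r z₀ + 1))
  set ν := min 1 (δ * r z₀ / 4)
  have hν : 0 < ν := lt_min one_pos (by positivity)
  have hν1 : ν ≤ 1 := min_le_left _ _
  have hνδ : ν ≤ δ * r z₀ / 4 := min_le_right _ _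
  refine ⟨ν, hν, fun w hw hrw => ?_⟩
  by_contra! hfar
  have hmid_le := hmid w z₀ (r z₀ + ν) hrw (lt_add_of_pos_right _ hν) <| by
    calc ε / (r z₀ + 1) * (r z₀ + ν) ≤ ε := by
          rw [div_mul_eq_mul_div, div_le_iff₀ (by linarith)]; gcongr
      _ ≤ _ := hfar
  have hmin_mid : r z₀ ≤ r (midpoint ℝ w z₀) := hmin (hC.midpoint_mem hw hz₀)
  nlinarith [mul_pos hδ hν]

theorem tendsto_of_tendsto_asympRadius_of_isMinOn (hu : Bornology.IsBounded (Set.range u))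
    {C : Set X} (hC : Convex ℝ C) {z₀ : X} (hz₀ : z₀ ∈ C) (hmin : IsMinOn (asympRadius u) C z₀)
    (hv : ∀ m, v m ∈ C)
    (hrv : Tendsto (fun m => asympRadius u (v m)) atTop (𝓝 (asympRadius u z₀))) :
    Tendsto v atTop (𝓝 z₀) := by
  refine Metric.tendsto_nhds.2 fun ε hε => ?_
  obtain ⟨ν, hν, h⟩ := exists_forall_norm_sub_lt_of_isMinOn hu hC hz₀ hmin hε
  filter_upwards [hrv.eventually_lt_const (lt_add_of_pos_right _ hν)] with m hm
  rw [dist_eq_norm]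
  exact h _ (hv m) hm

end AsymptoticRadius

section NearlyNonexpansive

variable {X : Type*} [NormedAddCommGroup X] {T : X → X} {C : Set X} {a : ℕ → ℝ}

def NearlyNonexpansiveOn (T : X → X) (C : Set X) (a : ℕ → ℝ) : Prop :=
  ∀ x ∈ C, ∀ y ∈ C, ∀ n, 1 ≤ n → ‖T^[n] x - T^[n] y‖ ≤ ‖x - y‖ + a n

namespace NearlyNonexpansiveOn

theorem asympRadius_iterate_le (hT : NearlyNonexpansiveOn T C a) (hTC : Set.MapsTo T C C)
    {c z : X} (hc : c ∈ C) (hz : z ∈ C) (hu : Bornology.IsBounded (Set.range fun n => T^[n] c))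
    {m : ℕ} (hm : 1 ≤ m) :
    asympRadius (fun n => T^[n] c) (T^[m] z) ≤ asympRadius (fun n => T^[n] c) z + a m := by
  calc asympRadius (fun n => T^[n] c) (T^[m] z)
      = asympRadius (fun n => T^[n + m] c) (T^[m] z) :=
        (limsup_nat_add (fun n => ‖T^[n] c - T^[m] z‖) m).symm
    _ ≤ _ := asympRadius_le_add_of_eventually_le hu <| Eventually.of_forall fun n => by
        rw [add_comm, Function.iterate_add_apply]
        exact hT _ (hTC.iterate n hc) z hz m hm

theorem norm_iterate_sub_le (hT : NearlyNonexpansiveOn T C a) {x q : X} (hx : x ∈ C) (hq : q ∈ C)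
    (hTq : T q = q) {n : ℕ} (ha : 0 ≤ a n) : ‖T^[n] x - q‖ ≤ ‖x - q‖ + a n := by
  rcases Nat.eq_zero_or_pos n with rfl | hn
  · simpa using ha
  · calc ‖T^[n] x - q‖ = ‖T^[n] x - T^[n] q‖ := by rw [Function.iterate_fixed hTq]
      _ ≤ ‖x - q‖ + a n := hT x hx q hq n hn

variable [NormedSpace ℝ X]

theorem norm_picardMann_sub_le (hT : NearlyNonexpansiveOn T C a) {x q : X} {t : ℝ} {n : ℕ}
    (hx : x ∈ C) (hy : (1 - t) • x + t • T^[n] x ∈ C) (ht₀ : 0 ≤ t) (ht₁ : t ≤ 1)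
    (hq : q ∈ C) (hTq : T q = q) (ha : 0 ≤ a n) :
    ‖T^[n] ((1 - t) • x + t • T^[n] x) - q‖ ≤ ‖x - q‖ + 2 * a n := by
  have hTx := hT.norm_iterate_sub_le hx hq hTq ha
  have hmix : ‖(1 - t) • x + t • T^[n] x - q‖ ≤ ‖x - q‖ + a n :=
    calc ‖(1 - t) • x + t • T^[n] x - q‖ = ‖(1 - t) • (x - q) + t • (T^[n] x - q)‖ := by
          congr 1; module
      _ ≤ (1 - t) * ‖x - q‖ + t * ‖T^[n] x - q‖ := by
          refine (norm_add_le _ _).trans_eq ?_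
          rw [norm_smul_of_nonneg (by linarith), norm_smul_of_nonneg ht₀]
      _ ≤ ‖x - q‖ + a n := by nlinarith
  linarith [hT.norm_iterate_sub_le hy hq hTq ha]

variable [UniformConvexSpace X]

theorem exists_fixedPoint (hT : NearlyNonexpansiveOn T C a) (ha : Tendsto a atTop (𝓝 0))
    (hC : C.Nonempty) (hCcp : IsCompact C) (hCcv : Convex ℝ C) (hTC : Set.MapsTo T C C)
    (hTc : ContinuousOn T C) : ∃ p ∈ C, T p = p := by
  obtain ⟨c, hc⟩ := hC
  have hu : Bornology.IsBounded (Set.range fun n => T^[n] c) :=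
    hCcp.isBounded.subset (Set.range_subset_iff.2 fun n => hTC.iterate n hc)
  obtain ⟨z, hzC, hmin⟩ := hCcp.exists_isMinOn ⟨c, hc⟩
    (lipschitzWith_asympRadius hu).continuous.continuousOn
  have hiter : Tendsto (fun m => T^[m] z) atTop (𝓝 z) := by
    refine tendsto_of_tendsto_asympRadius_of_isMinOn hu hCcv hzC hmin
      (fun m => hTC.iterate m hzC) ?_
    refine tendsto_of_tendsto_of_tendsto_of_le_of_le' tendsto_const_nhds
      (by simpa using tendsto_const_nhds.add ha) (Eventually.of_forall fun m => ?_) ?_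
    · exact hmin (hTC.iterate m hzC)
    · filter_upwards [eventually_ge_atTop 1] with m hm
      exact hT.asympRadius_iterate_le hTC hc hzC hu hm
  refine ⟨z, hzC, tendsto_nhds_unique ?_ ((tendsto_add_atTop_iff_nat 1).2 hiter)⟩
  have hTiter := (hTc z hzC).tendsto.comp (tendsto_nhdsWithin_iff.2
    ⟨hiter, Eventually.of_forall fun m => hTC.iterate m hzC⟩)
  simpa only [Function.comp_def, ← Function.iterate_succ_apply' T] using hTiter

end NearlyNonexpansiveOn

end NearlyNonexpansive

theorem tendsto_zero_of_le_add_of_frequently_lt {d e : ℕ → ℝ} (hd : ∀ n, 0 ≤ d n)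
    (he : ∀ n, 0 ≤ e n) (hes : Summable e) (hde : ∀ n, d (n + 1) ≤ d n + e n)
    (hfreq : ∀ ε > 0, ∃ᶠ n in atTop, d n < ε) : Tendsto d atTop (𝓝 0) := by
  set s : ℕ → ℝ := fun n => ∑ k ∈ Finset.range n, e k
  have hanti : Antitone fun n => d n - s n := antitone_nat_of_succ_le fun n => by
    simp only [s, Finset.sum_range_succ]; linarith [hde n]
  have htail : Tendsto (fun n => ∑' k, e k - s n) atTop (𝓝 0) := by
    simpa only [sub_self] using
      (tendsto_const_nhds (x := ∑' k, e k)).sub hes.hasSum.tendsto_sum_nat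
  refine Metric.tendsto_atTop.2 fun ε hε => ?_
  obtain ⟨N, hN⟩ := eventually_atTop.1 (htail.eventually_lt_const (half_pos hε))
  obtain ⟨n₀, hn₀N, hdn₀⟩ := frequently_atTop.1 (hfreq _ (half_pos hε)) N
  refine ⟨n₀, fun m hm => ?_⟩
  rw [Real.dist_eq, sub_zero, abs_of_nonneg (hd m)]
  linarith [hanti hm, hN n₀ hn₀N, hes.sum_le_tsum (Finset.range m) fun i _ => he i]

theorem ContinuousOn.isClosed_sep_fixedPt {X : Type*} [TopologicalSpace X] [T2Space X]
    {T : X → X} {C : Set X} (hT : ContinuousOn T C) (hC : IsClosed C) :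
    IsClosed {p ∈ C | T p = p} :=
  (hT.prodMk continuousOn_id).preimage_isClosed_of_isClosed hC isClosed_diagonal

theorem liminf_infDist_eq_zero_of_tendsto {ι X : Type*} [PseudoMetricSpace X] {l : Filter ι}
    [l.NeBot] {x : ι → X} {p : X} {F : Set X} (hxp : Tendsto x l (𝓝 p)) (hp : p ∈ F) :
    liminf (fun n => infDist (x n) F) l = 0 := by
  have h := ((continuous_infDist_pt F).tendsto p).comp hxp
  rw [infDist_zero_of_mem hp] at h
  exact h.liminf_eq

theorem IsCompact.exists_mapClusterPt_mem_of_liminf_infDist_eq_zero {X : Type*} [MetricSpace X]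
    {C F : Set X} {x : ℕ → X} (hC : IsCompact C) (hx : ∀ n, x n ∈ C) (hF : IsClosed F)
    (hFne : F.Nonempty) (hlim : liminf (fun n => infDist (x n) F) atTop = 0) :
    ∃ p ∈ F, MapClusterPt p atTop x := by
  have hbdd : IsBoundedUnder (· ≤ ·) atTop fun n => infDist (x n) F :=
    isBoundedUnder_of ⟨infDist (x 0) F + diam C, fun n => infDist_le_infDist_add_dist.trans
      (add_le_add le_rfl (dist_le_diam_of_mem hC.isBounded (hx n) (hx 0)))⟩
  obtain ⟨ψ, hψd, hψ⟩ := exists_seq_tendsto_liminf hbdd.isCoboundedUnder_ge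
    (isBoundedUnder_of ⟨0, fun _ => infDist_nonneg⟩)
  rw [hlim] at hψd
  obtain ⟨p, -, φ, hφ, hxp⟩ := hC.tendsto_subseq fun k => hx (ψ k)
  refine ⟨p, (hF.mem_iff_infDist_zero hFne).2 ?_,
    hxp.mapClusterPt.of_comp (hψ.comp hφ.tendsto_atTop)⟩
  exact tendsto_nhds_unique (((continuous_infDist_pt F).tendsto p).comp hxp)
    (hψd.comp hφ.tendsto_atTop)

theorem stmt_13_general
    {X : Type*} [NormedAddCommGroup X] [NormedSpace ℝ X]
    [UniformConvexSpace X]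
    (C : Set X) (hC : C.Nonempty) (hCcp : IsCompact C) (hCcv : Convex ℝ C)
    (T : X → X) (hT : Set.MapsTo T C C)
    (L : ℝ)
    (hTL : ∀ x ∈ C, ∀ y ∈ C, ∀ n, 1 ≤ n → ‖T^[n] x - T^[n] y‖ ≤ L * ‖x - y‖)
    (a : ℕ → ℝ) (ha : ∀ n, a n ∈ Set.Ico (0 : ℝ) 1)
    (halim : Filter.Tendsto a Filter.atTop (nhds 0))
    (hasum : Summable a)
    (hTa : ∀ x ∈ C, ∀ y ∈ C, ∀ n, 1 ≤ n → ‖T^[n] x - T^[n] y‖ ≤ ‖x - y‖ + a n)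
    (α : ℕ → ℝ) (a' b' : ℝ) (ha' : 0 < a') (hb' : b' < 1)
    (hα : ∀ n, a' ≤ α n ∧ α n ≤ b')
    (x y : ℕ → X)
    (hxC : ∀ n, x n ∈ C) (hyC : ∀ n, y n ∈ C)
    (hy : ∀ n, y n = (1 - α n) • x n + α n • T^[n] (x n))
    (hx : ∀ n, x (n + 1) = T^[n] (y n)) :
    (∃ p ∈ C, T p = p ∧ Filter.Tendsto x Filter.atTop (nhds p)) ↔
      Filter.liminf (fun n => Metric.infDist (x n) {p ∈ C | T p = p}) Filter.atTop = 0 := by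
  have hTc : ContinuousOn T C := (LipschitzOnWith.of_dist_le' fun x hx y hy => by
    simpa [dist_eq_norm] using hTL x hx y hy 1 le_rfl).continuousOn
  refine ⟨fun ⟨p, hpC, hpT, hxp⟩ => liminf_infDist_eq_zero_of_tendsto hxp ⟨hpC, hpT⟩,
    fun hlim => ?_⟩
  obtain ⟨p₀, hp₀⟩ := NearlyNonexpansiveOn.exists_fixedPoint hTa halim hC hCcp hCcv hT hTc
  obtain ⟨p, ⟨hpC, hpT⟩, hp⟩ := hCcp.exists_mapClusterPt_mem_of_liminf_infDist_eq_zero hxC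
    (hTc.isClosed_sep_fixedPt hCcp.isClosed) ⟨p₀, hp₀⟩ hlim
  refine ⟨p, hpC, hpT, tendsto_iff_norm_sub_tendsto_zero.2 ?_⟩
  refine tendsto_zero_of_le_add_of_frequently_lt (fun n => norm_nonneg _)
    (fun n => mul_nonneg zero_le_two (ha n).1) (hasum.mul_left 2) (fun n => ?_) fun ε hε => ?_
  · rw [hx n, hy n]
    exact NearlyNonexpansiveOn.norm_picardMann_sub_le hTa (hxC n) (hy n ▸ hyC n)
      (ha'.le.trans (hα n).1) ((hα n).2.trans hb'.le) hpC hpT (ha n).1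
  · exact (hp.frequently (ball_mem_nhds p hε)).mono fun n hn => by rwa [dist_eq_norm] at hn

/-- Theorem 3.2: `{x n}` converges strongly to a fixed point of `T` iff `liminf d(x n, F(T)) = 0`. -/
theorem stmt_13
    {X : Type*} [NormedAddCommGroup X] [NormedSpace ℝ X]
    [CompleteSpace X] [UniformConvexSpace X]
    (C : Set X) (hC : C.Nonempty) (hCcp : IsCompact C) (hCcv : Convex ℝ C)
    (T : X → X) (hT : Set.MapsTo T C C)
    (L : ℝ) (hL : 0 < L)
    (hTL : ∀ x ∈ C, ∀ y ∈ C, ∀ n, 1 ≤ n → ‖T^[n] x - T^[n] y‖ ≤ L * ‖x - y‖)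
    (a : ℕ → ℝ) (ha : ∀ n, a n ∈ Set.Ico (0 : ℝ) 1)
    (halim : Filter.Tendsto a Filter.atTop (nhds 0))
    (hasum : Summable a)
    (hTa : ∀ x ∈ C, ∀ y ∈ C, ∀ n, 1 ≤ n → ‖T^[n] x - T^[n] y‖ ≤ ‖x - y‖ + a n)
    (α : ℕ → ℝ) (a' b' : ℝ) (ha' : 0 < a') (hb' : b' < 1)
    (hα : ∀ n, a' ≤ α n ∧ α n ≤ b')
    (x y : ℕ → X)
    (hx0 : x 0 ∈ C)
    (hxC : ∀ n, x n ∈ C) (hyC : ∀ n, y n ∈ C)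
    (hy : ∀ n, y n = (1 - α n) • x n + α n • T^[n] (x n))
    (hx : ∀ n, x (n + 1) = T^[n] (y n)) :
    (∃ p ∈ C, T p = p ∧ Filter.Tendsto x Filter.atTop (nhds p)) ↔
      Filter.liminf (fun n => Metric.infDist (x n) {p ∈ C | T p = p}) Filter.atTop = 0 :=
  stmt_13_general C hC hCcp hCcv T hT L hTL a ha halim hasum hTa α a' b' ha' hb' hα x y hxC hyC hy
    hx
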